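/- arXiv:2002.07826 — 3 statements merged into one kernel-verified Lean document; each statement's English description precedes it below -/
import Mathlib

section
/- Let C be a linear [n,k]_q code with generator matrix G ∈ F_q^{k×n} of rank k, let φ = (M, α) ∈ Aut(C), and let A_φ ∈ GL(k, F_q) satisfy (G M)^α = A_φ G. Let a, b ∈ F_q^k with b^T = (A_φ a^T)^{α^{-1}}. Then the semimonomial transformation ([[M,0],[0,1]], α) of F_q^{n+1} maps the code generated by (G | b^T) onto the code generated by (G | a^T); in particular, the [n+1,k]_q codes generated by (G | a^T) and (G | b^T) are equivalent via a semimonomial transformation whose underlying coordinate permutation fixes the last coordinate. -/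
open Matrix

variable {F : Type*} [Field F]

/-- A monomial matrix: a product `D * P` of an invertible diagonal matrix and a
permutation matrix. -/
def IsMonomial {n : Type*} [Fintype n] [DecidableEq n] (M : Matrix n n F) : Prop :=
  ∃ (d : n → Fˣ) (P : Equiv.Perm n),
    M = Matrix.diagonal (fun i => (d i : F)) * P.permMatrix F

/-- The semimonomial transformation `(M, α)` acting by `v ↦ (v M)^α`. -/
def semiMap {n : Type*} [Fintype n] (M : Matrix n n F) (α : F ≃+* F) (v : n → F) : n → F :=
  fun j => α (Matrix.vecMul v M j)

/-- The row space of a matrix. -/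
def rowSpan {k n : Type*} (G : Matrix k n F) : Submodule F (n → F) :=
  Submodule.span F (Set.range fun i => G i)

/-- Two linear codes are equivalent if some semimonomial transformation maps
one onto the other. -/
def CodeEquiv {n : Type*} [Fintype n] [DecidableEq n] (C1 C2 : Submodule F (n → F)) : Prop :=
  ∃ (M : Matrix n n F) (α : F ≃+* F),
    IsMonomial M ∧ semiMap M α '' (C1 : Set (n → F)) = (C2 : Set (n → F))

/-- The matrix `(G | aᵀ)` obtained from `G` by appending the column `aᵀ`. -/
def appendCol {k n : Type*} (G : Matrix k n F) (a : k → F) : Matrix k (n ⊕ Unit) F :=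
  Matrix.of fun i => Sum.elim (G i) (fun _ => a i)

/-!
Appending a column commutes with the semimonomial action once the extra coordinate is fixed:
`((G | bᵀ) · diag(M, 1))^α = ((G M)^α | α(b)ᵀ) = (A G | A aᵀ) = A (G | aᵀ)`, and the invertible `A`
does not change the row space. Equivalence is symmetric because the inverse of `v ↦ (v N)^α` is the
semimonomial map `w ↦ (w (N⁻¹)^α)^{α⁻¹}`.
-/

section Monomial

variable {m : Type*} [Fintype m] [DecidableEq m]

lemma diagonal_mul_permMatrix_apply {R : Type*} [Semiring R] (d : m → R) (σ : Equiv.Perm m)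
    (i j : m) : (diagonal d * σ.permMatrix R) i j = if σ i = j then d i else 0 := by
  simp only [PEquiv.mul_toMatrix_toPEquiv, submatrix_apply, id, diagonal_apply,
    Equiv.eq_symm_apply]

lemma isMonomial_iff {M : Matrix m m F} :
    IsMonomial M ↔ ∃ (d : m → Fˣ) (σ : Equiv.Perm m),
      ∀ i j, M i j = if σ i = j then (d i : F) else 0 := by
  simp only [IsMonomial, ← Matrix.ext_iff, diagonal_mul_permMatrix_apply, eq_comm (a := M _ _)]

lemma isMonomial_one : IsMonomial (1 : Matrix m m F) :=
  ⟨1, 1, by simp⟩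

lemma IsMonomial.fromBlocks_zero_zero {m' : Type*} [Fintype m'] [DecidableEq m']
    {M : Matrix m m F} {M' : Matrix m' m' F} (hM : IsMonomial M) (hM' : IsMonomial M') :
    IsMonomial (fromBlocks M 0 0 M') := by
  obtain ⟨d, σ, hd⟩ := isMonomial_iff.mp hM
  obtain ⟨d', σ', hd'⟩ := isMonomial_iff.mp hM'
  refine isMonomial_iff.mpr ⟨Sum.elim d d', σ.sumCongr σ', ?_⟩
  rintro (i | i) (j | j) <;> simp [hd, hd']

lemma IsMonomial.map {M : Matrix m m F} (hM : IsMonomial M) (α : F ≃+* F) :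
    IsMonomial (M.map α) := by
  obtain ⟨d, σ, hd⟩ := isMonomial_iff.mp hM
  exact isMonomial_iff.mpr ⟨fun i => Units.map α (d i), σ, fun i j => by simp [hd, apply_ite α]⟩

lemma IsMonomial.exists_mul_eq_one {M : Matrix m m F} (hM : IsMonomial M) :
    ∃ M', IsMonomial M' ∧ M * M' = 1 := by
  obtain ⟨d, σ, hd⟩ := isMonomial_iff.mp hM
  refine ⟨diagonal (fun i => (((d (σ.symm i))⁻¹ : Fˣ) : F)) * σ⁻¹.permMatrix F, ⟨_, _, rfl⟩, ?_⟩
  ext i k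
  rw [mul_apply, Finset.sum_eq_single (σ i)]
  · simp [hd, one_apply]
  · intro j _ hj
    simp [hd, Ne.symm hj]
  · simp

lemma IsMonomial.isUnit {M : Matrix m m F} (hM : IsMonomial M) : IsUnit M := by
  obtain ⟨M', -, h⟩ := hM.exists_mul_eq_one
  exact (isUnit_iff_isUnit_det M).mpr (isUnit_det_of_right_inverse h)

lemma IsMonomial.inv {M : Matrix m m F} (hM : IsMonomial M) : IsMonomial M⁻¹ := by
  obtain ⟨M', hM', h⟩ := hM.exists_mul_eq_one
  rwa [inv_eq_right_inv h]

end Monomial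

section RowSpan

variable {k m : Type*}

def semiMapₛₗ [Fintype m] (N : Matrix m m F) (α : F ≃+* F) :
    (m → F) →ₛₗ[(α : F →+* F)] m → F where
  toFun := semiMap N α
  map_add' u v := funext fun j => by simp [semiMap, add_vecMul]
  map_smul' c v := funext fun j => by simp [semiMap, smul_vecMul]

lemma semiMap_image_rowSpan [Fintype m] (X : Matrix k m F) (N : Matrix m m F) (α : F ≃+* F) :
    semiMap N α '' (rowSpan X : Set (m → F)) = rowSpan ((X * N).map α) := by
  change semiMapₛₗ N α '' _ = _
  rw [← Submodule.map_coe, rowSpan, Submodule.map_span, ← Set.range_comp]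
  rfl

lemma rowSpan_mul_le [Fintype k] (B : Matrix k k F) (Y : Matrix k m F) :
    rowSpan (B * Y) ≤ rowSpan Y := by
  refine Submodule.span_le.mpr ?_
  rintro _ ⟨i, rfl⟩
  change B i ᵥ* Y ∈ rowSpan Y
  rw [vecMul_eq_sum]
  exact Submodule.sum_mem _ fun l _ => Submodule.smul_mem _ _ (Submodule.subset_span ⟨l, rfl⟩)

lemma rowSpan_mul_of_isUnit [Fintype k] [DecidableEq k] {B : Matrix k k F} (hB : IsUnit B)
    (Y : Matrix k m F) :
    rowSpan (B * Y) = rowSpan Y := by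
  refine (rowSpan_mul_le B Y).antisymm ?_
  conv_lhs => rw [← nonsing_inv_mul_cancel_left B Y ((isUnit_iff_isUnit_det B).mp hB)]
  exact rowSpan_mul_le _ _

end RowSpan

section CodeEquiv

variable {m : Type*} [Fintype m] [DecidableEq m]

lemma semiMap_inv_map_semiMap {N : Matrix m m F} (hN : IsUnit N) (α : F ≃+* F) (v : m → F) :
    semiMap (N⁻¹.map α) α.symm (semiMap N α v) = v := by
  funext j
  have := RingHom.map_vecMul (α : F →+* F) N⁻¹ (v ᵥ* N) j
  simp only [RingHom.coe_coe] at this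
  change α.symm ((α ∘ (v ᵥ* N) ᵥ* N⁻¹.map α) j) = v j
  rw [← this, RingEquiv.symm_apply_apply, vecMul_vecMul,
    mul_nonsing_inv N ((isUnit_iff_isUnit_det N).mp hN), vecMul_one]

lemma CodeEquiv.symm {C₁ C₂ : Submodule F (m → F)} (h : CodeEquiv C₁ C₂) : CodeEquiv C₂ C₁ := by
  obtain ⟨N, α, hN, hC⟩ := h
  refine ⟨N⁻¹.map α, α.symm, hN.inv.map α, ?_⟩
  rw [← hC, Set.image_image]
  simp [semiMap_inv_map_semiMap hN.isUnit]

end CodeEquiv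

section AppendCol

variable {k n R : Type*}

lemma appendCol_mul_fromBlocks_one [Semiring R] [Fintype n] (G : Matrix k n R) (c : k → R)
    (M : Matrix n n R) :
    appendCol G c * fromBlocks M 0 0 (1 : Matrix Unit Unit R) = appendCol (G * M) c := by
  ext i (j | j) <;> simp [appendCol, mul_apply, Fintype.sum_sum_type]

lemma appendCol_map {S : Type*} (G : Matrix k n R) (c : k → R) (f : R → S) :
    (appendCol G c).map f = appendCol (G.map f) (f ∘ c) := by
  ext i (j | j) <;> rfl

lemma mul_appendCol [Semiring R] [Fintype k] (A : Matrix k k R) (G : Matrix k n R) (c : k → R) :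
    A * appendCol G c = appendCol (A * G) (A *ᵥ c) := by
  ext i (j | j) <;> rfl

end AppendCol

theorem stmt3_general {n k : ℕ}
    (G : Matrix (Fin k) (Fin n) F)
    (M : Matrix (Fin n) (Fin n) F) (α : F ≃+* F)
    (hM : IsMonomial M)
    (A : Matrix (Fin k) (Fin k) F) (hA : IsUnit A)
    (hAG : (G * M).map ⇑α = A * G)
    (a b : Fin k → F)
    (hb : b = fun i => α.symm ((A *ᵥ a) i)) :
    semiMap (Matrix.fromBlocks M 0 0 (1 : Matrix Unit Unit F)) α ''
        (rowSpan (appendCol G b) : Set ((Fin n ⊕ Unit) → F)) =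
        (rowSpan (appendCol G a) : Set ((Fin n ⊕ Unit) → F)) ∧
      CodeEquiv (rowSpan (appendCol G a)) (rowSpan (appendCol G b)) := by
  have hαb : α ∘ b = A *ᵥ a := by
    funext i
    simp [hb]
  have hmap : (appendCol G b * fromBlocks M 0 0 (1 : Matrix Unit Unit F)).map α =
      A * appendCol G a := by
    rw [appendCol_mul_fromBlocks_one, appendCol_map, hAG, hαb, mul_appendCol]
  have himage : semiMap (fromBlocks M 0 0 1) α '' (rowSpan (appendCol G b) : Set _) =
      (rowSpan (appendCol G a) : Set ((Fin n ⊕ Unit) → F)) := by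
    rw [semiMap_image_rowSpan, hmap, rowSpan_mul_of_isUnit hA]
  exact ⟨himage, CodeEquiv.symm ⟨_, α, hM.fromBlocks_zero_zero isMonomial_one, himage⟩⟩

/-- Let `C` have generator matrix `G` of rank `k`, let `φ = (M, α) ∈ Aut(C)` and
`A_φ ∈ GL(k, F_q)` with `(G M)^α = A_φ G`, and let `bᵀ = (A_φ aᵀ)^{α⁻¹}`.  Then the
semimonomial transformation `([[M,0],[0,1]], α)` maps the code generated by `(G | bᵀ)`
onto the code generated by `(G | aᵀ)`; in particular the two `[n+1,k]_q` codes are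
equivalent (via a transformation whose coordinate permutation fixes the last coordinate). -/
theorem stmt3 [Fintype F] {n k : ℕ}
    (C : Submodule F (Fin n → F)) (G : Matrix (Fin k) (Fin n) F)
    (hG : rowSpan G = C) (hrank : G.rank = k)
    (M : Matrix (Fin n) (Fin n) F) (α : F ≃+* F)
    (hM : IsMonomial M)
    (hAut : semiMap M α '' (C : Set (Fin n → F)) = (C : Set (Fin n → F)))
    (A : Matrix (Fin k) (Fin k) F) (hA : IsUnit A)
    (hAG : (G * M).map ⇑α = A * G)
    (a b : Fin k → F)
    (hb : b = fun i => α.symm ((A *ᵥ a) i)) :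
    semiMap (Matrix.fromBlocks M 0 0 (1 : Matrix Unit Unit F)) α ''
        (rowSpan (appendCol G b) : Set ((Fin n ⊕ Unit) → F)) =
        (rowSpan (appendCol G a) : Set ((Fin n ⊕ Unit) → F)) ∧
      CodeEquiv (rowSpan (appendCol G a)) (rowSpan (appendCol G b)) :=
  stmt3_general G M α hM A hA hAG a b hb
end

section
/- Let W ⊆ ℕ_{≥1} and let C' be a linear [n',k']_q code of effective length n' all of whose nonzero codewords have Hamming weight in W, with a generator matrix G' containing a column g' of multiplicity r ≥ 1 (i.e., exactly r columns of G' span the point ⟨g'⟩). Then there exists a linear code C of effective length n'−r and dimension k'−1, all of whose nonzero codewords have weight in W, such that C' is equivalent to the code generated by a block matrix [[Ĝ, 0],[a, 1⋯1]], where Ĝ ∈ F_q^{(k'−1)×(n'−r)} is a generator matrix of C, a ∈ F_q^{n'−r}, and the last block consists of r columns. Moreover, if Λ is the maximum multiplicity among columns of G' whose span differs from ⟨g'⟩, then the maximum column multiplicity of (a generator matrix of) C is at least Λ. -/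
/-!
Pick a codeword `c0` with `c0 j0 = 1`. On `C'` every coordinate whose column spans `⟨g'⟩` is a
nonzero multiple of coordinate `j0`, so the hyperplane `K` of codewords vanishing at `j0` vanishes
on all `r` of these coordinates. Deleting them is therefore injective on `K` and preserves weights,
and the punctured `K` is the code `C`. Rescaling the deleted coordinates turns each of them into a
copy of coordinate `j0`; this monomial map sends a basis of `K` together with `c0` to the rows of
`[[Gres, 0], [a, 1⋯1]]`. Finally the rows of `Gres` are punctured codewords of `C'`, so columns of
`G'` spanning the same point still do so in `Gres`, which bounds the multiplicities from below.
-/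

open Matrix

variable {F : Type*} [Field F]

noncomputable def colMult {m n : Type*} [Fintype n] (G : Matrix m n F) (j0 : n) : ℕ :=
  Nat.card {j : n // Submodule.span F {fun i => G i j} =
    Submodule.span F {fun i => G i j0}}

/-- A semimonomial transformation (coordinate relabeling `e`, nonzero scalars `d`, field
automorphism `α`) acting by `v ↦ ((v ∘ e⁻¹) ⬝ d)^α`. -/
def monMap {n1 n2 : Type*} (e : n1 ≃ n2) (d : n2 → Fˣ) (α : F ≃+* F) (v : n1 → F) :
    n2 → F :=
  fun j => α ((d j : F) * v (e.symm j))

def CodeEquivR {n1 n2 : Type*} (C1 : Submodule F (n1 → F)) (C2 : Submodule F (n2 → F)) :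
    Prop :=
  ∃ (e : n1 ≃ n2) (d : n2 → Fˣ) (α : F ≃+* F),
    monMap e d α '' (C1 : Set (n1 → F)) = (C2 : Set (n2 → F))

/-- The block matrix `[[Gres, 0], [a, 1⋯1]]` with `r` columns in the last block. -/
def extBlock {k m r : ℕ} (Gres : Matrix (Fin k) (Fin m) F) (a : Fin m → F) :
    Matrix (Fin k ⊕ Unit) (Fin m ⊕ Fin r) F :=
  Matrix.fromBlocks Gres 0 (Matrix.of fun _ j => a j) (Matrix.of fun _ _ => (1 : F))

section ColumnRelations

variable {m n : Type*} {G : Matrix m n F}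

theorem apply_eq_mul_apply_of_col_eq_smul {j j' : n} {a : F}
    (h : (fun i => G i j) = a • fun i => G i j') {c : n → F} (hc : c ∈ rowSpan G) :
    c j = a * c j' := by
  have hle : rowSpan G ≤ LinearMap.ker (LinearMap.proj j - a • LinearMap.proj j') :=
    Submodule.span_le.2 <| by
      rintro _ ⟨i, rfl⟩
      simp [congrFun h i]
  simpa [sub_eq_zero] using hle hc

theorem col_ne_zero_of_mem_rowSpan {j : n} {c : n → F} (hc : c ∈ rowSpan G) (hcj : c j ≠ 0) :
    (fun i => G i j) ≠ 0 := fun h0 =>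
  hcj (by simpa using apply_eq_mul_apply_of_col_eq_smul (j' := j) (a := 0) (by simp [h0]) hc)

theorem exists_unit_apply_eq_of_span_col_eq {j j' : n}
    (h : Submodule.span F {fun i => G i j} = Submodule.span F {fun i => G i j'}) :
    ∃ u : Fˣ, ∀ c ∈ rowSpan G, c j = u * c j' := by
  obtain ⟨u, hu⟩ := Submodule.span_singleton_eq_span_singleton.1 h.symm
  exact ⟨u, fun c hc => apply_eq_mul_apply_of_col_eq_smul hu.symm hc⟩

theorem apply_eq_zero_of_span_col_eq {j j' : n}
    (h : Submodule.span F {fun i => G i j} = Submodule.span F {fun i => G i j'})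
    {c : n → F} (hc : c ∈ rowSpan G) (hcj' : c j' = 0) : c j = 0 := by
  obtain ⟨u, hu⟩ := exists_unit_apply_eq_of_span_col_eq h
  rw [hu c hc, hcj', mul_zero]

theorem span_col_eq_of_rows_mem_rowSpan {m' : Type*} {H : Matrix m' n F}
    (hH : ∀ i, H i ∈ rowSpan G) {j j' : n}
    (h : Submodule.span F {fun i => G i j} = Submodule.span F {fun i => G i j'}) :
    Submodule.span F {fun i => H i j} = Submodule.span F {fun i => H i j'} := by
  obtain ⟨u, hu⟩ := exists_unit_apply_eq_of_span_col_eq h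
  have hcol : (fun i => H i j) = (u : F) • fun i => H i j' := funext fun i => hu _ (hH i)
  rw [hcol, Submodule.span_singleton_smul_eq u.isUnit]

theorem exists_mem_rowSpan_apply_eq_zero_apply_ne_zero {j j0 : n}
    (hj : (fun i => G i j) ≠ 0)
    (h : Submodule.span F {fun i => G i j} ≠ Submodule.span F {fun i => G i j0}) :
    ∃ c ∈ rowSpan G, c j0 = 0 ∧ c j ≠ 0 := by
  by_contra! hrow
  obtain ⟨a, ha⟩ : ∃ a : F, (fun i => G i j) = a • fun i => G i j0 := by
    by_cases hj0 : ∃ i0, G i0 j0 ≠ 0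
    · obtain ⟨i0, hi0⟩ := hj0
      refine ⟨G i0 j / G i0 j0, funext fun i => ?_⟩
      have := hrow (G i - (G i j0 / G i0 j0) • G i0)
        (Submodule.sub_mem _ (Submodule.subset_span ⟨i, rfl⟩)
          (Submodule.smul_mem _ _ (Submodule.subset_span ⟨i0, rfl⟩)))
        (by simp [div_mul_cancel₀ _ hi0])
      simp only [Pi.sub_apply, Pi.smul_apply, smul_eq_mul, sub_eq_zero] at this
      simp only [Pi.smul_apply, smul_eq_mul, this]
      ring
    · push Not at hj0
      exact ⟨0, funext fun i => by
        simpa using hrow (G i) (Submodule.subset_span ⟨i, rfl⟩) (hj0 i)⟩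
  have ha0 : a ≠ 0 := by rintro rfl; exact hj (by simpa using ha)
  exact h (by rw [ha, Submodule.span_singleton_smul_eq (IsUnit.mk0 a ha0)])

theorem colMult_le_colMult_submatrix [Fintype n] {m' n' : Type*} [Fintype n']
    {H : Matrix m' n F} (hH : ∀ i, H i ∈ rowSpan G) (f : n' → n) (y : n')
    (hf : ∀ j, Submodule.span F {fun i => G i j} = Submodule.span F {fun i => G i (f y)} →
      j ∈ Set.range f) :
    colMult G (f y) ≤ colMult (H.submatrix id f) y := by
  unfold colMult
  calc Nat.card {j // Submodule.span F {fun i => G i j} = Submodule.span F {fun i => G i (f y)}}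
      ≤ Nat.card {x // Submodule.span F {fun i => G i (f x)} =
          Submodule.span F {fun i => G i (f y)}} := by
        refine Nat.card_le_card_of_surjective (fun x => ⟨f x.1, x.2⟩) ?_
        rintro ⟨j, hj⟩
        obtain ⟨x, rfl⟩ := hf j hj
        exact ⟨⟨x, hj⟩, rfl⟩
    _ ≤ _ := Nat.card_le_card_of_injective _
        (Subtype.impEmbedding _ _ fun _ => span_col_eq_of_rows_mem_rowSpan hH).injective

end ColumnRelations

theorem exists_mem_apply_eq_one {ι : Type*} {V : Submodule F (ι → F)} {j : ι}
    (h : ∃ c ∈ V, c j ≠ 0) : ∃ c ∈ V, c j = 1 :=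
  let ⟨c, hc, hcj⟩ := h
  ⟨(c j)⁻¹ • c, V.smul_mem _ hc, inv_mul_cancel₀ hcj⟩

section Hyperplane

variable {M : Type*} [AddCommGroup M] [Module F M] {V : Submodule F M} {φ : M →ₗ[F] F} {v : M}

theorem inf_ker_sup_span_singleton_eq (hv : v ∈ V) (hφv : φ v = 1) :
    V ⊓ LinearMap.ker φ ⊔ Submodule.span F {v} = V := by
  refine le_antisymm (sup_le inf_le_left ((Submodule.span_singleton_le_iff_mem _ _).2 hv))
    fun c hc => Submodule.mem_sup.2 ⟨c - φ c • v, ⟨V.sub_mem hc (V.smul_mem _ hv), ?_⟩,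
      φ c • v, Submodule.smul_mem _ _ (Submodule.mem_span_singleton_self v),
      sub_add_cancel _ _⟩
  simp [hφv]

theorem finrank_inf_ker_add_one [FiniteDimensional F M] (hv : v ∈ V) (hφv : φ v = 1) :
    Module.finrank F ↥(V ⊓ LinearMap.ker φ) + 1 = Module.finrank F V := by
  have hv0 : v ≠ 0 := by rintro rfl; simp at hφv
  have hdisj : V ⊓ LinearMap.ker φ ⊓ Submodule.span F {v} = ⊥ := by
    refine (Submodule.eq_bot_iff _).2 fun c ⟨⟨_, hcφ⟩, hcv⟩ => ?_
    obtain ⟨a, rfl⟩ := Submodule.mem_span_singleton.1 hcv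
    simp_all
  have := Submodule.finrank_sup_add_finrank_inf_eq (V ⊓ LinearMap.ker φ) (Submodule.span F {v})
  rw [inf_ker_sup_span_singleton_eq hv hφv, hdisj, finrank_bot, add_zero,
    finrank_span_singleton hv0] at this
  exact this.symm

end Hyperplane

theorem exists_equiv_sum_fin_of_card_eq {n r : ℕ} (p : Fin n → Prop)
    (h : Nat.card {j // p j} = r) :
    ∃ e : Fin n ≃ Fin (n - r) ⊕ Fin r,
      (∀ j, ¬ p j ↔ ∃ y, e.symm (Sum.inl y) = j) ∧ ∀ x, p (e.symm (Sum.inr x)) := by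
  classical
  rw [Nat.card_eq_fintype_card] at h
  have hc : Fintype.card {j // ¬ p j} = n - r := by
    rw [Fintype.card_subtype_compl, h, Fintype.card_fin]
  let eN := Fintype.equivFinOfCardEq hc
  let eP := Fintype.equivFinOfCardEq h
  refine ⟨(Equiv.sumCompl p).symm.trans ((Equiv.sumComm _ _).trans (Equiv.sumCongr eN eP)),
    fun j => ⟨fun hj => ⟨eN ⟨j, hj⟩, by simp⟩, ?_⟩,
    fun x => by simpa using (eP.symm x).2⟩
  rintro ⟨y, rfl⟩
  simpa using (eN.symm y).2

theorem rowSpan_map {ι n n₂ : Type*} (B : Matrix ι n F) (L : (n → F) →ₗ[F] (n₂ → F)) :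
    (rowSpan B).map L = rowSpan (Matrix.of fun i => L (B i)) := by
  rw [rowSpan, Submodule.map_span, ← Set.range_comp]
  rfl

theorem exists_fin_span_eq_inf_ker {M : Type*} [AddCommGroup M] [Module F M]
    [FiniteDimensional F M] {V : Submodule F M} {φ : M →ₗ[F] F} {v : M} {k : ℕ}
    (hk : Module.finrank F V = k) (hv : v ∈ V) (hφv : φ v = 1) :
    ∃ b : Fin (k - 1) → M,
      Submodule.span F (Set.range b) = V ⊓ LinearMap.ker φ := by
  have hK : Module.finrank F ↥(V ⊓ LinearMap.ker φ) = k - 1 := by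
    have := finrank_inf_ker_add_one hv hφv
    omega
  let b := Module.finBasisOfFinrankEq F ↥(V ⊓ LinearMap.ker φ) hK
  refine ⟨fun i => b i, ?_⟩
  rw [show (Set.range fun i => (b i : M)) = (V ⊓ LinearMap.ker φ).subtype '' Set.range b from
    Set.range_comp _ _, ← Submodule.map_span, b.span_eq, Submodule.map_subtype_top]

section Shortening

variable {ι κ ρ : Type*}

def puncture (e : ι ≃ κ ⊕ ρ) : (ι → F) →ₗ[F] (κ → F) :=
  LinearMap.funLeft F F fun y => e.symm (Sum.inl y)

variable {e : ι ≃ κ ⊕ ρ}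

theorem hammingNorm_puncture [Fintype ι] [Fintype κ] [DecidableEq F] {c : ι → F}
    (hc : ∀ x, c (e.symm (Sum.inr x)) = 0) : hammingNorm (puncture e c) = hammingNorm c := by
  change hammingNorm (fun y => c (e.symm (Sum.inl y))) = _
  refine Finset.card_nbij (fun y => e.symm (Sum.inl y)) (fun y hy => by simpa using hy)
    (e.symm.injective.comp Sum.inl_injective).injOn fun j hj => ?_
  rcases h : e j with y | x
  · exact ⟨y, by simpa [← h] using hj, by simp [← h]⟩
  · exact absurd (hc x) (by simpa [← h] using hj)

variable {K : Submodule F (ι → F)} (hK : ∀ c ∈ K, ∀ x, c (e.symm (Sum.inr x)) = 0)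
include hK

theorem finrank_map_puncture [Fintype ι] [Fintype κ] :
    Module.finrank F (K.map (puncture e)) = Module.finrank F K := by
  classical
  rw [← LinearMap.range_domRestrict]
  refine LinearMap.finrank_range_of_inj <| (injective_iff_map_eq_zero _).2 fun c hc => ?_
  have h := hammingNorm_puncture (hK c c.2)
  rw [LinearMap.domRestrict_apply] at hc
  rw [hc, hammingNorm_zero] at h
  exact Subtype.ext (hammingNorm_eq_zero.1 h.symm)

theorem hammingNorm_mem_of_mem_map_puncture [Fintype ι] [Fintype κ] [DecidableEq F]
    {W : Set ℕ} (hW : ∀ c ∈ K, c ≠ 0 → hammingNorm c ∈ W) :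
    ∀ c ∈ K.map (puncture e), c ≠ 0 → hammingNorm c ∈ W := by
  rintro _ ⟨c, hc, rfl⟩ hc0
  rw [hammingNorm_puncture (hK c hc)]
  exact hW c hc (by rintro rfl; simp at hc0)

end Shortening

theorem codeEquivR_rowSpan_extBlock {n m r k : ℕ} {V : Submodule F (Fin n → F)} {j0 : Fin n}
    {e : Fin n ≃ Fin m ⊕ Fin r}
    (hP : ∀ x, ∃ u : Fˣ, ∀ c ∈ V, c (e.symm (Sum.inr x)) = u * c j0)
    {b : Fin k → Fin n → F}
    (hb : Submodule.span F (Set.range b) = V ⊓ LinearMap.ker (LinearMap.proj j0))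
    {c0 : Fin n → F} (hc0 : c0 ∈ V) (hc0j0 : c0 j0 = 1) :
    CodeEquivR V (rowSpan (extBlock (r := r) (Matrix.of fun i => puncture e (b i))
      (puncture e c0))) := by
  choose u hu using hP
  let d : Fin m ⊕ Fin r → Fˣ := Sum.elim 1 fun x => (u x)⁻¹
  -- after rescaling, each coordinate `e.symm (inr x)` becomes a copy of coordinate `j0`
  let T : (Fin n → F) →ₗ[F] (Fin m ⊕ Fin r → F) :=
    LinearMap.funLeft F F (Sum.elim (fun y => e.symm (Sum.inl y)) fun _ => j0)
  have hT : ∀ c ∈ V, monMap e d (RingEquiv.refl F) c = T c := by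
    intro c hc
    funext y
    rcases y with y | x <;> simp [monMap, d, T, hu _ c hc]
  have hrows : V = rowSpan (Matrix.of (Sum.elim b fun _ : Unit => c0)) := by
    rw [rowSpan, ← inf_ker_sup_span_singleton_eq (φ := LinearMap.proj j0) hc0 hc0j0, ← hb,
      ← Submodule.span_union, ← Set.range_const (ι := Unit) (c := c0), ← Set.Sum.elim_range]
    rfl
  have hbj0 (i : Fin k) : b i j0 = 0 := (hb.le (Submodule.subset_span ⟨i, rfl⟩)).2
  refine ⟨e, d, RingEquiv.refl F, ?_⟩
  rw [Set.image_congr hT, ← Submodule.map_coe, hrows, rowSpan_map]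
  congr 1
  refine congrArg (rowSpan (F := F)) ?_
  ext (i | _) (y | x)
  all_goals simp [extBlock, T, puncture, hbj0, hc0j0]

theorem stmt8_general [DecidableEq F] {n' k' r : ℕ} (W : Set ℕ)
    (C' : Submodule F (Fin n' → F)) (hdim : Module.finrank F C' = k')
    (heff : ∀ j, ∃ c ∈ C', c j ≠ 0)
    (hw : ∀ c ∈ C', c ≠ 0 → hammingNorm c ∈ W)
    (G' : Matrix (Fin k') (Fin n') F) (hG' : rowSpan G' = C')
    (j0 : Fin n') (hmult : colMult G' j0 = r) :
    ∃ (C : Submodule F (Fin (n' - r) → F))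
      (Gres : Matrix (Fin (k' - 1)) (Fin (n' - r)) F) (aa : Fin (n' - r) → F),
      rowSpan Gres = C ∧
      Module.finrank F C = k' - 1 ∧
      (∀ j, ∃ c ∈ C, c j ≠ 0) ∧
      (∀ c ∈ C, c ≠ 0 → hammingNorm c ∈ W) ∧
      CodeEquivR C' (rowSpan (extBlock (r := r) Gres aa)) ∧
      (∀ Λ : ℕ,
        (∀ j, Submodule.span F {fun i => G' i j} ≠ Submodule.span F {fun i => G' i j0} →
          colMult G' j ≤ Λ) →
        (∃ j, Submodule.span F {fun i => G' i j} ≠ Submodule.span F {fun i => G' i j0} ∧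
          colMult G' j = Λ) →
        ∃ j2 : Fin (n' - r), Λ ≤ colMult Gres j2) := by
  subst hG'
  obtain ⟨e, hN, hP⟩ := exists_equiv_sum_fin_of_card_eq _ hmult
  obtain ⟨c0, hc0, hc0j0⟩ := exists_mem_apply_eq_one (heff j0)
  obtain ⟨b, hb⟩ := exists_fin_span_eq_inf_ker (φ := LinearMap.proj j0) hdim hc0 hc0j0
  have hfin := finrank_inf_ker_add_one (φ := LinearMap.proj j0) hc0 hc0j0
  set K := rowSpan G' ⊓ LinearMap.ker (LinearMap.proj j0)
  have hK (c) (hc : c ∈ K) (x : Fin r) : c (e.symm (Sum.inr x)) = 0 :=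
    apply_eq_zero_of_span_col_eq (hP x) hc.1 hc.2
  refine ⟨K.map (puncture e), Matrix.of fun i => puncture e (b i), puncture e c0,
    (rowSpan_map (Matrix.of b) (puncture e)).symm.trans (congrArg _ hb), ?_, fun y => ?_,
    hammingNorm_mem_of_mem_map_puncture hK fun c hc => hw c hc.1,
    codeEquivR_rowSpan_extBlock (fun x => exists_unit_apply_eq_of_span_col_eq (hP x)) hb
      hc0 hc0j0, ?_⟩
  · rw [finrank_map_puncture hK]
    omega
  · obtain ⟨c, hc, hcj⟩ := heff (e.symm (Sum.inl y))
    obtain ⟨c, hc, hcj0, hcy⟩ := exists_mem_rowSpan_apply_eq_zero_apply_ne_zero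
      (col_ne_zero_of_mem_rowSpan hc hcj) ((hN _).2 ⟨y, rfl⟩)
    exact ⟨puncture e c, ⟨c, ⟨hc, hcj0⟩, rfl⟩, hcy⟩
  · rintro Λ - ⟨j, hj, rfl⟩
    obtain ⟨y, rfl⟩ := (hN j).1 hj
    have hle := colMult_le_colMult_submatrix (H := Matrix.of b)
      (fun i => (hb.le (Submodule.subset_span ⟨i, rfl⟩)).1) (fun y => e.symm (Sum.inl y)) y
      fun j2 h2 => (hN j2).1 (h2 ▸ hj)
    exact ⟨y, hle⟩

/-- Lemma 6.  If `C'` is an `[n',k']_q` code with all nonzero weights in `W ⊆ ℕ_{≥1}`,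
with a generator matrix `G'` containing a column `g'` of multiplicity `r ≥ 1`, then there
is an `[n'-r, k'-1, W]_q` code `C` with generator matrix `Gres` such that `C'` is equivalent
to the code generated by `[[Gres, 0], [a, 1⋯1]]`.  Moreover, if `Λ` is the maximum
multiplicity among the columns of `G'` whose span differs from `⟨g'⟩`, then the maximum
column multiplicity of `Gres` is at least `Λ`. -/
theorem stmt8 [Fintype F] [DecidableEq F] {n' k' r : ℕ} (W : Set ℕ)
    (hW : ∀ w ∈ W, 1 ≤ w)
    (C' : Submodule F (Fin n' → F)) (hdim : Module.finrank F C' = k')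
    (heff : ∀ j, ∃ c ∈ C', c j ≠ 0)
    (hw : ∀ c ∈ C', c ≠ 0 → hammingNorm c ∈ W)
    (G' : Matrix (Fin k') (Fin n') F) (hG' : rowSpan G' = C')
    (j0 : Fin n') (hr : 1 ≤ r) (hmult : colMult G' j0 = r) :
    ∃ (C : Submodule F (Fin (n' - r) → F))
      (Gres : Matrix (Fin (k' - 1)) (Fin (n' - r)) F) (aa : Fin (n' - r) → F),
      rowSpan Gres = C ∧
      Module.finrank F C = k' - 1 ∧
      (∀ j, ∃ c ∈ C, c j ≠ 0) ∧
      (∀ c ∈ C, c ≠ 0 → hammingNorm c ∈ W) ∧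
      CodeEquivR C' (rowSpan (extBlock (r := r) Gres aa)) ∧
      (∀ Λ : ℕ,
        (∀ j, Submodule.span F {fun i => G' i j} ≠ Submodule.span F {fun i => G' i j0} →
          colMult G' j ≤ Λ) →
        (∃ j, Submodule.span F {fun i => G' i j} ≠ Submodule.span F {fun i => G' i j0} ∧
          colMult G' j = Λ) →
        ∃ j2 : Fin (n' - r), Λ ≤ colMult Gres j2) :=
  stmt8_general W C' hdim heff hw G' hG' j0 hmult
end

section
/- Every binary linear code of dimension k has at least k minimal codewords. Moreover, this bound is attained: for all integers n ≥ k ≥ 1, the binary [n,k]_2 code obtained from the code generated by the k×k identity matrix by duplicating columns (so that the generator matrix has n columns, each a unit vector, with every unit vector occurring at least once) has exactly k minimal codewords. -/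
/-!
Over `𝔽₂` a vector is determined by its support, and if `supp m ⊆ supp c` then
`supp (c + m) = supp c \ supp m`. Hence every nonzero codeword `c` contains a minimal codeword
`m` (take one of minimal support below `c`), and `c = (c + m) + m` with `c + m` of strictly
smaller support: by well-founded induction the minimal codewords span the code, so there are at
least `dim C` of them.

For the code `{x ∘ f}` with `f` surjective, `x ↦ x ∘ f` is injective and
`supp (x ∘ f) = f ⁻¹' supp x` reflects inclusion of supports, so it carries the minimal codewords
of `𝔽₂ᵏ` (the unit vectors) bijectively onto those of the code.
-/

/-- A nonzero codeword `c` of a linear code `C` is minimal if the support of no other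
nonzero codeword of `C` is contained in the support of `c`. -/
def MinimalCW {n : ℕ} (C : Submodule (ZMod 2) (Fin n → ZMod 2))
    (c : Fin n → ZMod 2) : Prop :=
  c ∈ C ∧ c ≠ 0 ∧
    ∀ c' ∈ C, c' ≠ 0 → c' ≠ c → ¬ (Function.support c' ⊆ Function.support c)

open Function Submodule

section ZModTwo

variable {ι : Type*}

theorem support_injective_zmod_two : Injective (support : (ι → ZMod 2) → Set ι) := by
  intro x y h
  funext i
  have hi : x i ≠ 0 ↔ y i ≠ 0 := Set.ext_iff.1 h i
  revert hi
  generalize x i = a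
  generalize y i = b
  decide +revert

theorem support_add_zmod_two {x y : ι → ZMod 2} (h : support y ⊆ support x) :
    support (x + y) = support x \ support y := by
  ext i
  have hi : y i ≠ 0 → x i ≠ 0 := @h i
  simp only [mem_support, Pi.add_apply, Set.mem_sdiff]
  revert hi
  generalize x i = a
  generalize y i = b
  decide +revert

end ZModTwo

section Span

variable {n : ℕ} {C : Submodule (ZMod 2) (Fin n → ZMod 2)} {c : Fin n → ZMod 2}

theorem exists_minimalCW_support_subset (hc : c ∈ C) (hc0 : c ≠ 0) :
    ∃ m, MinimalCW C m ∧ support m ⊆ support c := by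
  obtain ⟨m, ⟨hmC, hm0, hmc⟩, hmin⟩ := exists_minimalFor_of_wellFoundedLT
    (fun d => d ∈ C ∧ d ≠ 0 ∧ support d ⊆ support c) support ⟨c, hc, hc0, subset_rfl⟩
  refine ⟨m, ⟨hmC, hm0, fun d hdC hd0 hdm hsub => hdm ?_⟩, hmc⟩
  exact support_injective_zmod_two (hsub.antisymm (hmin ⟨hdC, hd0, hsub.trans hmc⟩ hsub))

theorem mem_span_setOf_minimalCW (hc : c ∈ C) : c ∈ span (ZMod 2) {m | MinimalCW C m} := by
  induction hs : support c using WellFoundedLT.induction generalizing c with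
  | _ s ih =>
    subst hs
    by_cases hc0 : c = 0
    · exact hc0 ▸ zero_mem _
    obtain ⟨m, hm, hmc⟩ := exists_minimalCW_support_subset hc hc0
    have hlt : support (c + m) < support c := by
      rw [support_add_zmod_two hmc]
      exact hmc.sdiff_ssubset_of_nonempty (support_nonempty_iff.2 hm.2.1)
    have hcm : c = (c + m) + m := by
      rw [add_assoc, ← two_nsmul, ZModModule.char_nsmul_eq_zero, add_zero]
    rw [hcm]
    exact add_mem (ih _ hlt (C.add_mem hc hm.1) rfl) (subset_span hm)

theorem span_setOf_minimalCW : span (ZMod 2) {m | MinimalCW C m} = C :=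
  le_antisymm (span_le.2 fun _ hm => hm.1) fun _ => mem_span_setOf_minimalCW

theorem finrank_le_card_minimalCW :
    Module.finrank (ZMod 2) C ≤ Nat.card {c // MinimalCW C c} := by
  classical
  calc Module.finrank (ZMod 2) C
        = Module.finrank (ZMod 2) (span (ZMod 2) {m | MinimalCW C m}) := by
          rw [span_setOf_minimalCW]
    _ ≤ {m | MinimalCW C m}.toFinset.card := finrank_span_le_card _
    _ = Nat.card {c // MinimalCW C c} := by rw [Set.toFinset_card, Nat.card_eq_fintype_card]; rfl

end Span

theorem setOf_minimalCW_map {k n : ℕ} (C : Submodule (ZMod 2) (Fin k → ZMod 2))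
    (L : (Fin k → ZMod 2) →ₗ[ZMod 2] (Fin n → ZMod 2))
    (hL : ∀ x y, support (L x) ⊆ support (L y) ↔ support x ⊆ support y) :
    {c | MinimalCW (C.map L) c} = L '' {x | MinimalCW C x} := by
  have hinj : Injective L := fun x y h => support_injective_zmod_two
    (((hL x y).1 (h ▸ subset_rfl)).antisymm ((hL y x).1 (h ▸ subset_rfl)))
  ext c
  constructor
  · rintro ⟨⟨x, hx, rfl⟩, hc0, hmin⟩
    refine ⟨x, ⟨hx, (map_ne_zero_iff L hinj).1 hc0, fun y hy hy0 hyx hsub => ?_⟩, rfl⟩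
    exact hmin (L y) (mem_map_of_mem hy) ((map_ne_zero_iff L hinj).2 hy0) (hinj.ne hyx)
      ((hL y x).2 hsub)
  · rintro ⟨x, ⟨hx, hx0, hmin⟩, rfl⟩
    refine ⟨mem_map_of_mem hx, (map_ne_zero_iff L hinj).2 hx0, ?_⟩
    rintro _ ⟨y, hy, rfl⟩ hy0 hyx hsub
    exact hmin y hy ((map_ne_zero_iff L hinj).1 hy0) (ne_of_apply_ne L hyx) ((hL y x).1 hsub)

theorem setOf_minimalCW_top (k : ℕ) :
    {x | MinimalCW (⊤ : Submodule (ZMod 2) (Fin k → ZMod 2)) x} =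
      Set.range fun i => Pi.single i 1 := by
  ext x
  constructor
  · rintro ⟨-, hx0, hmin⟩
    obtain ⟨i, hi⟩ := support_nonempty_iff.2 hx0
    refine ⟨i, by_contra fun h => hmin _ trivial ?_ h ?_⟩
    · simp
    · simpa [Pi.support_single_of_ne one_ne_zero] using hi
  · rintro ⟨i, rfl⟩
    refine ⟨trivial, by simp, fun y _ hy0 hyi hsub => hyi (support_injective_zmod_two ?_)⟩
    rw [Pi.support_single_of_ne one_ne_zero] at hsub ⊢
    exact (Set.subset_singleton_iff_eq.1 hsub).resolve_left (support_eq_empty_iff.not.2 hy0)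

theorem card_minimalCW_range_funLeft {n k : ℕ} {f : Fin n → Fin k} (hf : Surjective f) :
    Nat.card {c // MinimalCW (LinearMap.range (LinearMap.funLeft (ZMod 2) (ZMod 2) f)) c} = k := by
  set L := LinearMap.funLeft (ZMod 2) (ZMod 2) f
  have hL : ∀ x y, support (L x) ⊆ support (L y) ↔ support x ⊆ support y :=
    fun x y => hf.preimage_subset_preimage_iff (s := support x) (t := support y)
  have hsingle : Injective fun i : Fin k => Pi.single i (1 : ZMod 2) := fun i j h => by
    simpa [Pi.support_single_of_ne one_ne_zero] using congrArg support h
  have hset : {c | MinimalCW (LinearMap.range L) c} = Set.range (L ∘ fun i => Pi.single i 1) := by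
    rw [LinearMap.range_eq_map, setOf_minimalCW_map _ _ hL, setOf_minimalCW_top, Set.range_comp]
  change Nat.card {c | MinimalCW (LinearMap.range L) c} = k
  rw [hset, Nat.card_range_of_injective
    ((LinearMap.funLeft_injective_of_surjective _ _ _ hf).comp hsingle), Nat.card_fin]

/-- Every binary linear code of dimension `k` has at least `k` minimal codewords, and
the bound is attained: for `n ≥ k ≥ 1`, the `[n,k]_2` code obtained from the code
generated by the `k × k` identity matrix by duplicating columns (its generator matrix
has `n` columns, each a unit vector, every unit vector occurring at least once, i.e.
the code is `{x ∘ f : x ∈ F_2^k}` for a surjection `f`) has exactly `k` minimal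
codewords. -/
theorem stmt14 :
    (∀ (n k : ℕ) (C : Submodule (ZMod 2) (Fin n → ZMod 2)),
        Module.finrank (ZMod 2) C = k →
        k ≤ Nat.card {c : Fin n → ZMod 2 // MinimalCW C c}) ∧
    (∀ (n k : ℕ), 1 ≤ k → k ≤ n → ∀ f : Fin n → Fin k, Function.Surjective f →
        Nat.card {c : Fin n → ZMod 2 //
          MinimalCW (LinearMap.range (LinearMap.funLeft (ZMod 2) (ZMod 2) f)) c} = k) :=
  ⟨fun _ _ _ hk => hk ▸ finrank_le_card_minimalCW,
    fun _ _ _ _ _ hf => card_minimalCW_range_funLeft hf⟩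
end
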